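/- arXiv:math/0303072 — 2 statements merged into one kernel-verified Lean document; each statement's English description precedes it below -/
import Mathlib

section
/- With the principal set [1],…,[7] as above, every even characteristic (pair (ε,ε') with ε·ε' = 0) is either the zero characteristic [0] or equals [i]+[j]+[k] for some distinct indices i, j, k ∈ {1,…,7}; this accounts for all 36 = 1 + C(7,3) even characteristics. -/
/-- The seven characteristics of the principal set. -/
def principalSet : Fin 7 → (Fin 3 → ZMod 2) × (Fin 3 → ZMod 2) :=
  ![(![1,0,1], ![0,0,1]), (![1,1,0], ![0,1,1]), (![1,1,1], ![0,1,0]),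
    (![0,1,1], ![1,0,1]), (![1,0,0], ![1,0,0]), (![0,0,1], ![1,1,1]),
    (![0,1,0], ![1,1,0])]

theorem even_characteristics_from_principal_set :
    (∀ c : (Fin 3 → ZMod 2) × (Fin 3 → ZMod 2),
      (∑ t, c.1 t * c.2 t) = 0 →
        c = 0 ∨
        (∃ i j k : Fin 7, i ≠ j ∧ j ≠ k ∧ i ≠ k ∧
          c = principalSet i + principalSet j + principalSet k)) ∧
    (Finset.univ.filter
      (fun c : (Fin 3 → ZMod 2) × (Fin 3 → ZMod 2) =>
        (∑ t, c.1 t * c.2 t) = 0)).card = 36 ∧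
    36 = 1 + Nat.choose 7 3 := by
  refine ⟨by decide, by decide, by decide⟩
end

section
/- Let k be a field of characteristic 2 and let a,b,c,d,e,f ∈ k satisfy a·b·c·(a+b+d)·(a+c+e)·(b+c+f)·(a+b+c+d+e+f+1) ≠ 0. Then the plane quartic Q(x,y,z) = (a x² + b y² + c z² + d x y + e x z + f y z)² - x y z (x+y+z) is a smooth projective plane curve (the three partial derivatives of Q and Q itself have no common projective zero over the algebraic closure of k). -/
open MvPolynomial

private lemma genus3_aux {K : Type*} [Field K] (two : (2 : K) = 0)
    (A B C' D E F x y z : K)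
    (hA : A ≠ 0) (hB : B ≠ 0) (hC : C' ≠ 0)
    (hD : A + B + D ≠ 0) (hE : A + C' + E ≠ 0) (hF : B + C' + F ≠ 0)
    (hG : A + B + C' + D + E + F + 1 ≠ 0)
    (hex : x ≠ 0 ∨ y ≠ 0 ∨ z ≠ 0)
    (h0 : (A * x ^ 2 + B * y ^ 2 + C' * z ^ 2 + D * x * y + E * x * z + F * y * z) ^ 2
        = x * y * z * (x + y + z))
    (hyz : y * z * (y + z) = 0)
    (hxz : x * z * (x + z) = 0)
    (hxy : x * y * (x + y) = 0) : False := by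
  have sq0 : ∀ u : K, u ^ 2 = 0 → u = 0 := fun u hu =>
    pow_eq_zero_iff (n := 2) (by norm_num) |>.mp hu
  by_cases hx : x = 0
  · by_cases hy : y = 0
    · have hz : z ≠ 0 := by tauto
      have key : (C' * z ^ 2) ^ 2 = 0 := by
        rw [hx, hy] at h0; linear_combination h0
      rcases mul_eq_zero.1 (sq0 _ key) with h' | h'
      · exact hC h'
      · exact hz (sq0 _ h')
    · by_cases hz : z = 0
      · have key : (B * y ^ 2) ^ 2 = 0 := by
          rw [hx, hz] at h0; linear_combination h0
        rcases mul_eq_zero.1 (sq0 _ key) with h' | h'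
        · exact hB h'
        · exact hy (sq0 _ h')
      · have hyz1 : y + z = 0 := by
          rcases mul_eq_zero.1 hyz with h' | h'
          · rcases mul_eq_zero.1 h' with h'' | h''
            · exact absurd h'' hy
            · exact absurd h'' hz
          · exact h'
        have hzy : z = y := by linear_combination -hyz1 + z * two
        have key : ((B + C' + F) * y ^ 2) ^ 2 = 0 := by
          rw [hx, hzy] at h0; linear_combination h0
        rcases mul_eq_zero.1 (sq0 _ key) with h' | h'
        · exact hF h'
        · exact hy (sq0 _ h')
  · by_cases hy : y = 0
    · by_cases hz : z = 0
      · have key : (A * x ^ 2) ^ 2 = 0 := by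
          rw [hy, hz] at h0; linear_combination h0
        rcases mul_eq_zero.1 (sq0 _ key) with h' | h'
        · exact hA h'
        · exact hx (sq0 _ h')
      · have hxz1 : x + z = 0 := by
          rcases mul_eq_zero.1 hxz with h' | h'
          · rcases mul_eq_zero.1 h' with h'' | h''
            · exact absurd h'' hx
            · exact absurd h'' hz
          · exact h'
        have hzx : z = x := by linear_combination -hxz1 + z * two
        have key : ((A + C' + E) * x ^ 2) ^ 2 = 0 := by
          rw [hy, hzx] at h0; linear_combination h0
        rcases mul_eq_zero.1 (sq0 _ key) with h' | h'
        · exact hE h'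
        · exact hx (sq0 _ h')
    · by_cases hz : z = 0
      · have hxy1 : x + y = 0 := by
          rcases mul_eq_zero.1 hxy with h' | h'
          · rcases mul_eq_zero.1 h' with h'' | h''
            · exact absurd h'' hx
            · exact absurd h'' hy
          · exact h'
        have hyx : y = x := by linear_combination -hxy1 + y * two
        have key : ((A + B + D) * x ^ 2) ^ 2 = 0 := by
          rw [hz, hyx] at h0; linear_combination h0
        rcases mul_eq_zero.1 (sq0 _ key) with h' | h'
        · exact hD h'
        · exact hx (sq0 _ h')
      · have hxy1 : x + y = 0 := by
          rcases mul_eq_zero.1 hxy with h' | h'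
          · rcases mul_eq_zero.1 h' with h'' | h''
            · exact absurd h'' hx
            · exact absurd h'' hy
          · exact h'
        have hxz1 : x + z = 0 := by
          rcases mul_eq_zero.1 hxz with h' | h'
          · rcases mul_eq_zero.1 h' with h'' | h''
            · exact absurd h'' hx
            · exact absurd h'' hz
          · exact h'
        have hyx : y = x := by linear_combination -hxy1 + y * two
        have hzx : z = x := by linear_combination -hxz1 + z * two
        have key : ((A + B + C' + D + E + F + 1) * x ^ 2) ^ 2 = 0 := by
          rw [hyx, hzx] at h0
          linear_combination h0 +
            ((A + B + C' + D + E + F) * x ^ 4 + 2 * x ^ 4) * two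
        rcases mul_eq_zero.1 (sq0 _ key) with h' | h'
        · exact hG h'
        · exact hx (sq0 _ h')

set_option maxRecDepth 10000 in
theorem genus3_model_smooth
    (k : Type*) [Field k] [CharP k 2]
    (a b c d e f : k)
    (h : a * b * c * (a + b + d) * (a + c + e) * (b + c + f) *
      (a + b + c + d + e + f + 1) ≠ 0) :
    let S : MvPolynomial (Fin 3) k :=
      C a * X 0 ^ 2 + C b * X 1 ^ 2 + C c * X 2 ^ 2 +
      C d * X 0 * X 1 + C e * X 0 * X 2 + C f * X 1 * X 2
    let Q : MvPolynomial (Fin 3) k :=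
      S ^ 2 - X 0 * X 1 * X 2 * (X 0 + X 1 + X 2)
    ∀ p : Fin 3 → AlgebraicClosure k, p ≠ 0 →
      ¬ (aeval p Q = 0 ∧ aeval p (pderiv 0 Q) = 0 ∧
         aeval p (pderiv 1 Q) = 0 ∧ aeval p (pderiv 2 Q) = 0) := by
  intro S Q p hp
  rintro ⟨h0, h1, h2, h3⟩
  have h20 : (2 : AlgebraicClosure k) = 0 := by
    have := CharP.cast_eq_zero (AlgebraicClosure k) 2
    exact_mod_cast this
  have e01 : pderiv (0:Fin 3) (X 1 : MvPolynomial (Fin 3) k) = 0 := pderiv_X_of_ne (by decide)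
  have e02 : pderiv (0:Fin 3) (X 2 : MvPolynomial (Fin 3) k) = 0 := pderiv_X_of_ne (by decide)
  have e10 : pderiv (1:Fin 3) (X 0 : MvPolynomial (Fin 3) k) = 0 := pderiv_X_of_ne (by decide)
  have e12 : pderiv (1:Fin 3) (X 2 : MvPolynomial (Fin 3) k) = 0 := pderiv_X_of_ne (by decide)
  have e20 : pderiv (2:Fin 3) (X 0 : MvPolynomial (Fin 3) k) = 0 := pderiv_X_of_ne (by decide)
  have e21 : pderiv (2:Fin 3) (X 1 : MvPolynomial (Fin 3) k) = 0 := pderiv_X_of_ne (by decide)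
  simp only [Q, S, map_sub, map_add, map_mul, map_pow, pderiv_mul, pderiv_pow,
    pderiv_X_self, e01, e02, e10, e12, e20, e21, pderiv_C, aeval_X, aeval_C,
    map_one, map_zero, map_natCast, map_ofNat, Nat.cast_ofNat, h20, zero_mul, mul_zero,
    zero_add, add_zero, one_mul, mul_one, pow_one, zero_sub, neg_eq_zero] at h0 h1 h2 h3
  have hex : p 0 ≠ 0 ∨ p 1 ≠ 0 ∨ p 2 ≠ 0 := by
    by_contra hc
    push_neg at hc
    exact hp (funext fun i => by fin_cases i <;> simp [hc.1, hc.2.1, hc.2.2])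
  have hinj : Function.Injective (algebraMap k (AlgebraicClosure k)) := RingHom.injective _
  have H : algebraMap k (AlgebraicClosure k) (a * b * c * (a + b + d) * (a + c + e) *
      (b + c + f) * (a + b + c + d + e + f + 1)) ≠ 0 :=
    fun hh => h (hinj (by rw [map_zero]; exact hh))
  rw [map_mul, map_mul, map_mul, map_mul, map_mul, map_mul] at H
  simp only [map_add, map_one, mul_ne_zero_iff] at H
  obtain ⟨⟨⟨⟨⟨⟨hA, hB⟩, hC⟩, hD⟩, hE⟩, hF⟩, hG⟩ := H
  refine genus3_aux h20 (algebraMap k (AlgebraicClosure k) a)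
    (algebraMap k (AlgebraicClosure k) b) (algebraMap k (AlgebraicClosure k) c)
    (algebraMap k (AlgebraicClosure k) d) (algebraMap k (AlgebraicClosure k) e)
    (algebraMap k (AlgebraicClosure k) f) (p 0) (p 1) (p 2)
    hA hB hC hD hE hF hG hex ?_ ?_ ?_ ?_
  · linear_combination h0
  · linear_combination h1 - p 0 * p 1 * p 2 * h20
  · linear_combination h2 - p 0 * p 1 * p 2 * h20
  · linear_combination h3 - p 0 * p 1 * p 2 * h20
end
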